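/- The Lie algebra so_{4m+2} over F_2 decomposes as a direct sum of Lie ideals F_2 ⊕ l, where F_2 is the (one-dimensional) center and l = [so_{4m+2}, so_{4m+2}]; equivalently, the center of so_{4m+2} over F_2 is not contained in the derived subalgebra. In particular this decomposition is preserved by the adjoint SO_{4m+2}-action. -/

import Mathlib

/-!
In blocks, `J * A` is alternating exactly when `A = [[a, u + uᵀ], [v + vᵀ, aᵀ]]`. The trace of the
upper-left block kills brackets: `tr (a a' - a' a) = 0`, and in characteristic 2
`tr ((u + uᵀ) s) = 2 tr (u s) = 0` for symmetric `s`. Conversely, brackets with the block-diagonal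
copy of `gl_r` produce every element whose upper-left block has trace zero, so the derived algebra
is exactly the kernel of this functional. Commuting with the block-diagonal `gl_r` forces a
central element to be scalar, and the identity has block trace `r = 2m + 1 = 1`: the center is a
line that is not contained in the hyperplane `[so, so]`, hence a complement to it.
-/

open Matrix

attribute [local instance 100] LieRing.ofAssociativeRing

noncomputable section

/-- The Gram matrix `J = fromBlocks 0 1 1 0` of the split (hyperbolic) quadratic form on
`F₂^{2r}`. -/
def Jmat (r : ℕ) : Matrix (Fin r ⊕ Fin r) (Fin r ⊕ Fin r) (ZMod 2) :=
  Matrix.fromBlocks 0 1 1 0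

open LieAlgebra

def LieSubalgebra.bracketSpan {R L : Type*} [CommRing R] [LieRing L] [LieAlgebra R L]
    (K : LieSubalgebra R L) : Submodule R L :=
  Submodule.span R (Set.image2 (⁅·, ·⁆) (K : Set L) K)

theorem LieSubalgebra.mem_derivedSeries_one_iff {R L : Type*} [CommRing R] [LieRing L]
    [LieAlgebra R L] (K : LieSubalgebra R L) (x : K) :
    x ∈ derivedSeries R K 1 ↔ (x : L) ∈ K.bracketSpan := by
  have hinj : Function.Injective (K.incl : K →ₗ[R] L) := Subtype.val_injective
  rw [derivedSeries_def, derivedSeriesOfIdeal_succ, derivedSeriesOfIdeal_zero,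
    ← LieSubmodule.mem_toSubmodule, LieSubmodule.lieIdeal_oper_eq_linear_span',
    ← Submodule.comap_map_eq_of_injective hinj (Submodule.span _ _), Submodule.mem_comap,
    Submodule.map_span, bracketSpan]
  congr! 2
  ext y
  simp only [Set.mem_image, Set.mem_ofPred_eq, LieSubmodule.mem_top, true_and, Set.mem_image2]
  constructor
  · rintro ⟨_, ⟨a, b, rfl⟩, rfl⟩
    exact ⟨a, a.2, b, b.2, rfl⟩
  · rintro ⟨a, ha, b, hb, rfl⟩
    exact ⟨_, ⟨⟨a, ha⟩, ⟨b, hb⟩, rfl⟩, rfl⟩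

section CenterAndDerived

variable {K L : Type*} [Field K] [LieRing L] [LieAlgebra K L] (φ : Module.Dual K L) {z : L}

theorem LieAlgebra.isCompl_center_derivedSeries_of_ker_eq
    (hcenter : (center K L).toSubmodule = K ∙ z)
    (hderived : (derivedSeries K L 1).toSubmodule = LinearMap.ker φ) (hz : φ z ≠ 0) :
    IsCompl (center K L) (derivedSeries K L 1) := by
  have hφ : φ ≠ 0 := fun h => hz (by simp [h])
  rw [← LieSubmodule.isCompl_toSubmodule, hcenter, hderived]
  exact (Submodule.isCompl_span_singleton_of_isCoatom_of_notMem
    (LinearMap.isCoatom_ker_of_surjective (LinearMap.surjective hφ)) hz).symm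

theorem LieAlgebra.center_not_le_derivedSeries_of_ker_eq
    (hcenter : (center K L).toSubmodule = K ∙ z)
    (hderived : (derivedSeries K L 1).toSubmodule = LinearMap.ker φ) (hz : φ z ≠ 0) :
    ¬ center K L ≤ derivedSeries K L 1 := by
  intro hle
  have hz_center : z ∈ (center K L).toSubmodule := hcenter ▸ Submodule.mem_span_singleton_self z
  have hz_derived : z ∈ (derivedSeries K L 1).toSubmodule := hle hz_center
  rw [hderived, LinearMap.mem_ker] at hz_derived
  exact hz hz_derived

end CenterAndDerived

theorem Matrix.sub_eq_add_of_charTwo {m n R : Type*} [Ring R] [CharP R 2] (A B : Matrix m n R) :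
    A - B = A + B := by
  ext i j
  exact CharTwo.sub_eq_add _ _

theorem Matrix.IsSymm.exists_eq_add_transpose {n R : Type*} [LinearOrder n] [AddMonoid R]
    {b : Matrix n n R} (hb : b.IsSymm) (hdiag : ∀ i, b i i = 0) : ∃ u, b = u + uᵀ := by
  refine ⟨of fun i j => if i < j then b i j else 0, ?_⟩
  ext i j
  rcases lt_trichotomy i j with h | rfl | h
  · simp [h, h.not_gt]
  · simp [hdiag]
  · simp [h, h.not_gt, hb.apply i j]

theorem Matrix.trace_add_transpose_mul_of_isSymm {n R : Type*} [Fintype n] [CommRing R]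
    [CharP R 2] (u : Matrix n n R) {s : Matrix n n R} (hs : s.IsSymm) :
    trace ((u + uᵀ) * s) = 0 := by
  have : trace (uᵀ * s) = trace (u * s) := by
    rw [← trace_transpose, transpose_mul, transpose_transpose, hs.eq, trace_mul_comm]
  rw [add_mul, trace_add, this, CharTwo.add_self_eq_zero]

theorem Matrix.eq_zero_of_commute_single_same {n α : Type*} [DecidableEq n] [Fintype n]
    [Semiring α] {M : Matrix n n α} (hM : ∀ i, Commute (single i i 1) M)
    (hdiag : ∀ i, M i i = 0) : M = 0 := by
  ext i j
  rcases eq_or_ne j i with rfl | hij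
  · exact hdiag j
  · exact row_eq_zero_of_commute_single (hM i) hij

abbrev BlockMat (r : ℕ) := Matrix (Fin r ⊕ Fin r) (Fin r ⊕ Fin r) (ZMod 2)

variable {r : ℕ}

def soBlocks (a u v : Matrix (Fin r) (Fin r) (ZMod 2)) : BlockMat r :=
  fromBlocks a (u + uᵀ) (v + vᵀ) aᵀ

theorem Jmat_mul_fromBlocks (a b c d : Matrix (Fin r) (Fin r) (ZMod 2)) :
    Jmat r * fromBlocks a b c d = fromBlocks c d a b := by
  simp [Jmat, fromBlocks_multiply]

theorem alternating_Jmat_mul_iff (A : BlockMat r) :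
    ((Jmat r * A)ᵀ = Jmat r * A ∧ ∀ i, (Jmat r * A) i i = 0) ↔
      ∃ a u v, A = soBlocks a u v := by
  obtain ⟨a, b, c, d, rfl⟩ : ∃ a b c d, A = fromBlocks a b c d :=
    ⟨_, _, _, _, (fromBlocks_toBlocks A).symm⟩
  simp only [Jmat_mul_fromBlocks, fromBlocks_transpose, fromBlocks_inj, Sum.forall,
    fromBlocks_apply₁₁, fromBlocks_apply₂₂, soBlocks]
  constructor
  · rintro ⟨⟨hc, hda, -, hb⟩, hcd, hbd⟩
    obtain ⟨u, rfl⟩ := IsSymm.exists_eq_add_transpose hb hbd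
    obtain ⟨v, rfl⟩ := IsSymm.exists_eq_add_transpose hc hcd
    exact ⟨a, u, v, rfl, rfl, rfl, hda.symm⟩
  · rintro ⟨a, u, v, rfl, rfl, rfl, rfl⟩
    refine ⟨⟨isSymm_add_transpose_self v, rfl, transpose_transpose a,
      isSymm_add_transpose_self u⟩, fun i => ?_, fun i => ?_⟩ <;>
    simp [CharTwo.add_self_eq_zero]

theorem soBlocks_add (a u v a' u' v' : Matrix (Fin r) (Fin r) (ZMod 2)) :
    soBlocks (a + a') (u + u') (v + v') = soBlocks a u v + soBlocks a' u' v' := by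
  simp only [soBlocks, fromBlocks_add, transpose_add]
  congr 1 <;> abel

theorem soBlocks_zero : soBlocks (0 : Matrix (Fin r) (Fin r) (ZMod 2)) 0 0 = 0 := by
  simp [soBlocks]

theorem lie_soBlocks_gl (a a' : Matrix (Fin r) (Fin r) (ZMod 2)) :
    ⁅soBlocks a 0 0, soBlocks a' 0 0⁆ = soBlocks (a * a' + a' * a) 0 0 := by
  simp [soBlocks, Ring.lie_def, fromBlocks_multiply, sub_eq_add_of_charTwo, fromBlocks_add,
    transpose_add, transpose_mul, add_comm]

theorem lie_soBlocks_upper (a u : Matrix (Fin r) (Fin r) (ZMod 2)) :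
    ⁅soBlocks a 0 0, soBlocks 0 u 0⁆ = soBlocks 0 (a * u + u * aᵀ) 0 := by
  simp only [soBlocks, Ring.lie_def, fromBlocks_multiply, sub_eq_add_of_charTwo, fromBlocks_add,
    transpose_add, transpose_mul, transpose_transpose]
  simp only [add_zero, zero_add, mul_zero, zero_mul, transpose_zero, mul_add, add_mul]
  congr 1
  abel

theorem lie_soBlocks_lower (a v : Matrix (Fin r) (Fin r) (ZMod 2)) :
    ⁅soBlocks a 0 0, soBlocks 0 0 v⁆ = soBlocks 0 0 (aᵀ * v + v * a) := by
  simp only [soBlocks, Ring.lie_def, fromBlocks_multiply, sub_eq_add_of_charTwo, fromBlocks_add,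
    transpose_add, transpose_mul, transpose_transpose]
  simp only [add_zero, zero_add, mul_zero, zero_mul, transpose_zero, mul_add, add_mul]
  congr 1
  abel

def blockTrace : BlockMat r →ₗ[ZMod 2] ZMod 2 where
  toFun A := trace A.toBlocks₁₁
  map_add' A B := by simp [toBlocks₁₁, trace, Finset.sum_add_distrib]
  map_smul' t A := by simp [toBlocks₁₁, trace, Finset.mul_sum]

theorem blockTrace_fromBlocks (a b c d : Matrix (Fin r) (Fin r) (ZMod 2)) :
    blockTrace (fromBlocks a b c d) = trace a :=
  congrArg trace (toBlocks_fromBlocks₁₁ a b c d)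

theorem blockTrace_one : blockTrace (1 : BlockMat r) = r := by
  rw [← fromBlocks_one, blockTrace_fromBlocks, trace_one, Fintype.card_fin]

theorem blockTrace_lie_soBlocks (a u v a' u' v' : Matrix (Fin r) (Fin r) (ZMod 2)) :
    blockTrace ⁅soBlocks a u v, soBlocks a' u' v'⁆ = 0 := by
  simp only [soBlocks, Ring.lie_def, fromBlocks_multiply, sub_eq_add_of_charTwo, fromBlocks_add,
    blockTrace_fromBlocks, trace_add,
    trace_add_transpose_mul_of_isSymm _ (isSymm_add_transpose_self _), trace_mul_comm a a',
    CharTwo.add_self_eq_zero]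

theorem soBlocks_eq_smul_one_of_commute {a u v : Matrix (Fin r) (Fin r) (ZMod 2)}
    (h : ∀ e, Commute (soBlocks e 0 0) (soBlocks a u v)) :
    ∃ t : ZMod 2, soBlocks a u v = t • 1 := by
  have hblocks : ∀ e, e * a = a * e ∧ e * (u + uᵀ) = (u + uᵀ) * eᵀ ∧
      eᵀ * (v + vᵀ) = (v + vᵀ) * e := by
    intro e
    have := (h e).eq
    simp only [soBlocks, fromBlocks_multiply, fromBlocks_inj, transpose_zero, add_zero, zero_add,
      zero_mul, mul_zero] at this
    exact ⟨this.1, this.2.1, this.2.2.1⟩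
  obtain ⟨t, rfl⟩ := mem_range_scalar_iff_commute_single'.2 fun i j => ((hblocks _).1 :)
  have hdiag (w : Matrix (Fin r) (Fin r) (ZMod 2)) (i : Fin r) : (w + wᵀ) i i = 0 := by
    simp [CharTwo.add_self_eq_zero]
  have hu : u + uᵀ = 0 := eq_zero_of_commute_single_same (fun i => by
    rw [Commute, SemiconjBy]; simpa [transpose_single] using (hblocks (single i i 1)).2.1)
    (hdiag u)
  have hv : v + vᵀ = 0 := eq_zero_of_commute_single_same (fun i => by
    rw [Commute, SemiconjBy]; simpa [transpose_single] using (hblocks (single i i 1)).2.2)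
    (hdiag v)
  refine ⟨t, ?_⟩
  rw [soBlocks, hu, hv, scalar_apply, diagonal_transpose, fromBlocks_diagonal,
    smul_one_eq_diagonal]
  congr
  ext (i | i) <;> rfl

section Subalgebra

variable (so : LieSubalgebra (ZMod 2) (BlockMat r))
  (hso : ∀ A, A ∈ so ↔ ∃ a u v, A = soBlocks a u v)
include hso

theorem lie_soBlocks_mem_bracketSpan (a u v a' u' v' : Matrix (Fin r) (Fin r) (ZMod 2)) :
    ⁅soBlocks a u v, soBlocks a' u' v'⁆ ∈ so.bracketSpan :=
  Submodule.subset_span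
    (Set.mem_image2_of_mem ((hso _).2 ⟨a, u, v, rfl⟩) ((hso _).2 ⟨a', u', v', rfl⟩))

theorem soBlocks_gl_mem_bracketSpan [NeZero r] {a : Matrix (Fin r) (Fin r) (ZMod 2)}
    (ha : trace a = 0) : soBlocks a 0 0 ∈ so.bracketSpan := by
  -- `E_ii + E_00 = [E_i0, E_0i]`, so the correction makes every matrix unit a commutator.
  suffices ∀ a, soBlocks (a + trace a • (single 0 0 1 : Matrix (Fin r) (Fin r) (ZMod 2))) 0 0 ∈
      so.bracketSpan by
    simpa [ha] using this a
  intro a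
  induction a using Matrix.induction_on' with
  | h_zero => simp [soBlocks_zero]
  | h_add a a' ha ha' =>
    convert add_mem ha ha' using 1
    rw [← soBlocks_add, add_zero, trace_add, add_smul, add_add_add_comm]
  | h_std_basis i j t =>
    rcases eq_or_ne i j with rfl | hij
    · rcases eq_or_ne i 0 with rfl | hi
      · simp [trace_single_eq_same, smul_single, CharTwo.add_self_eq_zero, soBlocks_zero]
      · have : single i i t + trace (single i i t) • single 0 0 1 =
            single i 0 1 * single 0 i t + single 0 i t * single i 0 1 := by
          simp [trace_single_eq_same, smul_single, single_mul_single_same]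
        rw [this, ← lie_soBlocks_gl]
        exact lie_soBlocks_mem_bracketSpan so hso _ _ _ _ _ _
    · have : single i j t + trace (single i j t) • single 0 0 1 =
          single i i 1 * single i j t + single i j t * single i i 1 := by
        simp [trace_single_eq_of_ne i j _ hij, single_mul_single_of_ne _ i j i hij.symm]
      rw [this, ← lie_soBlocks_gl]
      exact lie_soBlocks_mem_bracketSpan so hso _ _ _ _ _ _

theorem soBlocks_upper_mem_bracketSpan (u : Matrix (Fin r) (Fin r) (ZMod 2)) :
    soBlocks 0 u 0 ∈ so.bracketSpan := by
  induction u using Matrix.induction_on' with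
  | h_zero => simp [soBlocks_zero]
  | h_add u u' hu hu' => simpa using soBlocks_add 0 u 0 0 u' 0 ▸ add_mem hu hu'
  | h_std_basis i j t =>
    rcases eq_or_ne i j with rfl | hij
    · simp [soBlocks, ← single_add, CharTwo.add_self_eq_zero]
    · have : single i j t = single i i 1 * single i j t + single i j t * (single i i 1)ᵀ := by
        simp [single_mul_single_of_ne _ i j i hij.symm]
      rw [this, ← lie_soBlocks_upper]
      exact lie_soBlocks_mem_bracketSpan so hso _ _ _ _ _ _

theorem soBlocks_lower_mem_bracketSpan (v : Matrix (Fin r) (Fin r) (ZMod 2)) :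
    soBlocks 0 0 v ∈ so.bracketSpan := by
  induction v using Matrix.induction_on' with
  | h_zero => simp [soBlocks_zero]
  | h_add v v' hv hv' => simpa using soBlocks_add 0 0 v 0 0 v' ▸ add_mem hv hv'
  | h_std_basis i j t =>
    rcases eq_or_ne i j with rfl | hij
    · simp [soBlocks, ← single_add, CharTwo.add_self_eq_zero]
    · have : single i j t = (single i i 1)ᵀ * single i j t + single i j t * single i i 1 := by
        simp [single_mul_single_of_ne _ i j i hij.symm]
      rw [this, ← lie_soBlocks_lower]
      exact lie_soBlocks_mem_bracketSpan so hso _ _ _ _ _ _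

theorem bracketSpan_le_ker_blockTrace : so.bracketSpan ≤ LinearMap.ker blockTrace := by
  refine Submodule.span_le.2 ?_
  rintro _ ⟨A, hA, B, hB, rfl⟩
  obtain ⟨a, u, v, rfl⟩ := (hso A).1 hA
  obtain ⟨a', u', v', rfl⟩ := (hso B).1 hB
  exact blockTrace_lie_soBlocks a u v a' u' v'

theorem mem_bracketSpan_iff [NeZero r] {A : BlockMat r} (hA : A ∈ so) :
    A ∈ so.bracketSpan ↔ blockTrace A = 0 := by
  refine ⟨fun h => bracketSpan_le_ker_blockTrace so hso h, fun h => ?_⟩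
  obtain ⟨a, u, v, rfl⟩ := (hso A).1 hA
  rw [soBlocks, blockTrace_fromBlocks] at h
  have : soBlocks a u v = soBlocks a 0 0 + soBlocks 0 u 0 + soBlocks 0 0 v := by
    simp only [← soBlocks_add, add_zero, zero_add]
  rw [this]
  exact add_mem (add_mem (soBlocks_gl_mem_bracketSpan so hso h)
    (soBlocks_upper_mem_bracketSpan so hso u)) (soBlocks_lower_mem_bracketSpan so hso v)

theorem one_mem_of_mem_iff : (1 : BlockMat r) ∈ so :=
  (hso 1).2 ⟨1, 0, 0, by simp [soBlocks, fromBlocks_one]⟩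

theorem center_eq_span_one :
    (center (ZMod 2) so).toSubmodule = ZMod 2 ∙ ⟨1, one_mem_of_mem_iff so hso⟩ := by
  ext z
  rw [LieSubmodule.mem_toSubmodule, center, LieModule.mem_maxTrivSubmodule,
    Submodule.mem_span_singleton]
  constructor
  · intro hz
    obtain ⟨a, u, v, hauv⟩ := (hso z).1 z.2
    have hcomm (e : Matrix (Fin r) (Fin r) (ZMod 2)) :
        Commute (soBlocks e 0 0) (soBlocks a u v) := by
      have := congrArg Subtype.val (hz ⟨soBlocks e 0 0, (hso _).2 ⟨e, 0, 0, rfl⟩⟩)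
      rw [LieSubalgebra.coe_bracket, Ring.lie_def, hauv, ZeroMemClass.coe_zero,
        sub_eq_zero] at this
      exact this
    obtain ⟨t, ht⟩ := soBlocks_eq_smul_one_of_commute hcomm
    exact ⟨t, Subtype.ext (by rw [hauv, ht]; rfl)⟩
  · rintro ⟨t, rfl⟩ x
    ext
    simp [Ring.lie_def]

theorem derivedSeries_one_eq_ker [NeZero r] :
    (derivedSeries (ZMod 2) so 1).toSubmodule =
      LinearMap.ker (blockTrace ∘ₗ (so.incl : so →ₗ[ZMod 2] BlockMat r)) := by
  ext x
  rw [LieSubmodule.mem_toSubmodule, LieSubalgebra.mem_derivedSeries_one_iff, LinearMap.mem_ker]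
  exact mem_bracketSpan_iff so hso x.2

end Subalgebra

/-- `so` is given by its carrier, the matrices `A` with `J * A` alternating: in characteristic 2
this, not skew-symmetry of `J * A`, describes the Lie algebra of `SO_{2r}` for the split form. -/
theorem stmt_15 (m : ℕ)
    (so : LieSubalgebra (ZMod 2)
        (Matrix (Fin (2 * m + 1) ⊕ Fin (2 * m + 1)) (Fin (2 * m + 1) ⊕ Fin (2 * m + 1))
          (ZMod 2)))
    (hso : ∀ A, A ∈ so ↔
        ((Jmat (2 * m + 1) * A)ᵀ = Jmat (2 * m + 1) * A ∧
         ∀ i, (Jmat (2 * m + 1) * A) i i = 0)) :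
    IsCompl (LieAlgebra.center (ZMod 2) ↥so) (LieAlgebra.derivedSeries (ZMod 2) ↥so 1) ∧
    ¬ (LieAlgebra.center (ZMod 2) ↥so ≤ LieAlgebra.derivedSeries (ZMod 2) ↥so 1) := by
  have hso' (A : BlockMat (2 * m + 1)) : A ∈ so ↔ ∃ a u v, A = soBlocks a u v :=
    (hso A).trans (alternating_Jmat_mul_iff A)
  have hodd : blockTrace (1 : BlockMat (2 * m + 1)) ≠ 0 := by
    rw [blockTrace_one, Nat.cast_succ, Nat.cast_mul, ZMod.natCast_self, zero_mul, zero_add]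
    exact one_ne_zero
  exact ⟨isCompl_center_derivedSeries_of_ker_eq _ (center_eq_span_one so hso')
      (derivedSeries_one_eq_ker so hso') hodd,
    center_not_le_derivedSeries_of_ker_eq _ (center_eq_span_one so hso')
      (derivedSeries_one_eq_ker so hso') hodd⟩
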